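/- The Kalman filter posterior covariance, written in the Joseph-free form P̃⁺(P) = P − P C^T (C P C^T + D D^T)⁻¹ C P, is monotone in the Loewner order: if 0 ⪯ P' ⪯ P, then P̃⁺(P') ⪯ P̃⁺(P), assuming D D^T is positive definite. -/

import Mathlib

/-!
The posterior covariance is the Loewner minimum over gains `K` of the Joseph-form covariance
`(1 - K C) P (1 - K C)ᴴ + K R Kᴴ`, attained at the Kalman gain `K_P = P Cᴴ S⁻¹`, `S = C P Cᴴ + R`:
completing the square adds exactly `(K - K_P) S (K - K_P)ᴴ`. For a fixed gain the Joseph form is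
monotone in `P` (a congruence plus a constant), so
`posteriorCov P' ≤ josephCov K_P P' ≤ josephCov K_P P = posteriorCov P`.
-/

open Matrix
open scoped ComplexOrder MatrixOrder

variable {𝕜 n m : Type*} [RCLike 𝕜] [Fintype n] [Fintype m]

lemma Matrix.PosSemidef.mul_mul_conjTranspose_add_posDef {P : Matrix n n 𝕜} {R : Matrix m m 𝕜}
    (hP : P.PosSemidef) (C : Matrix m n 𝕜) (hR : R.PosDef) : (C * P * Cᴴ + R).PosDef :=
  PosDef.posSemidef_add (hP.mul_mul_conjTranspose_same C) hR

variable [DecidableEq n]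

def josephCov (K : Matrix n m 𝕜) (P : Matrix n n 𝕜) (C : Matrix m n 𝕜) (R : Matrix m m 𝕜) :
    Matrix n n 𝕜 :=
  (1 - K * C) * P * (1 - K * C)ᴴ + K * R * Kᴴ

lemma josephCov_monotone (K : Matrix n m 𝕜) (C : Matrix m n 𝕜) (R : Matrix m m 𝕜) :
    Monotone (josephCov K · C R) := by
  intro P' P hle
  have hdiff : josephCov K P C R - josephCov K P' C R = (1 - K * C) * (P - P') * (1 - K * C)ᴴ := by
    simp only [josephCov, Matrix.mul_sub, Matrix.sub_mul]
    abel
  rw [le_iff, hdiff]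
  exact hle.mul_mul_conjTranspose_same _

variable [DecidableEq m]

noncomputable def kalmanGain (P : Matrix n n 𝕜) (C : Matrix m n 𝕜) (R : Matrix m m 𝕜) :
    Matrix n m 𝕜 :=
  P * Cᴴ * (C * P * Cᴴ + R)⁻¹

noncomputable def posteriorCov (P : Matrix n n 𝕜) (C : Matrix m n 𝕜) (R : Matrix m m 𝕜) :
    Matrix n n 𝕜 :=
  P - kalmanGain P C R * C * P

variable {P P' : Matrix n n 𝕜} {C : Matrix m n 𝕜} {R : Matrix m m 𝕜}

lemma josephCov_eq_posteriorCov_add (hP : P.IsHermitian) (hR : R.IsHermitian)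
    (hS : IsUnit (C * P * Cᴴ + R).det) (K : Matrix n m 𝕜) :
    josephCov K P C R = posteriorCov P C R
      + (K - kalmanGain P C R) * (C * P * Cᴴ + R) * (K - kalmanGain P C R)ᴴ := by
  set S := C * P * Cᴴ + R with hSdef
  have hSh : Sᴴ = S := ((isHermitian_mul_mul_conjTranspose C hP).add hR).eq
  have hGS : kalmanGain P C R * S = P * Cᴴ :=
    nonsing_inv_mul_cancel_right _ _ hS
  have hSG : S * (kalmanGain P C R)ᴴ = C * P := by
    rw [kalmanGain, conjTranspose_mul, conjTranspose_nonsing_inv, hSh, conjTranspose_mul,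
      conjTranspose_conjTranspose, hP.eq, ← Matrix.mul_assoc, mul_nonsing_inv _ hS,
      Matrix.one_mul]
  have hsq : (K - kalmanGain P C R) * S * (K - kalmanGain P C R)ᴴ
      = K * S * Kᴴ - K * (C * P) - P * Cᴴ * Kᴴ + kalmanGain P C R * (C * P) := by
    calc (K - kalmanGain P C R) * S * (K - kalmanGain P C R)ᴴ
        = K * S * Kᴴ - K * (S * (kalmanGain P C R)ᴴ) - kalmanGain P C R * S * Kᴴ
          + kalmanGain P C R * (S * (kalmanGain P C R)ᴴ) := by
          simp only [conjTranspose_sub, Matrix.sub_mul, Matrix.mul_sub, Matrix.mul_assoc]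
          abel
      _ = _ := by rw [hSG, hGS]
  rw [hsq, josephCov, posteriorCov, hSdef, conjTranspose_sub, conjTranspose_one, conjTranspose_mul]
  simp only [Matrix.mul_sub, Matrix.sub_mul, Matrix.mul_add, Matrix.add_mul, Matrix.mul_one,
    Matrix.one_mul, Matrix.mul_assoc]
  abel

lemma josephCov_kalmanGain (hP : P.IsHermitian) (hR : R.IsHermitian)
    (hS : IsUnit (C * P * Cᴴ + R).det) :
    josephCov (kalmanGain P C R) P C R = posteriorCov P C R := by
  simpa using josephCov_eq_posteriorCov_add hP hR hS (kalmanGain P C R)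

lemma posteriorCov_le_josephCov (hP : P.PosSemidef) (hR : R.PosDef) (K : Matrix n m 𝕜) :
    posteriorCov P C R ≤ josephCov K P C R := by
  have hS := hP.mul_mul_conjTranspose_add_posDef C hR
  rw [josephCov_eq_posteriorCov_add hP.isHermitian hR.isHermitian hS.det_pos.ne'.isUnit K, le_iff,
    add_sub_cancel_left]
  exact hS.posSemidef.mul_mul_conjTranspose_same _

theorem posteriorCov_mono (hR : R.PosDef) (hP' : P'.PosSemidef) (hle : P' ≤ P) :
    posteriorCov P' C R ≤ posteriorCov P C R := by
  have hP : P.PosSemidef := by simpa using hP'.add hle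
  have hS := hP.mul_mul_conjTranspose_add_posDef C hR
  calc posteriorCov P' C R ≤ josephCov (kalmanGain P C R) P' C R :=
        posteriorCov_le_josephCov hP' hR _
    _ ≤ josephCov (kalmanGain P C R) P C R := josephCov_monotone _ C R hle
    _ = posteriorCov P C R :=
        josephCov_kalmanGain hP.isHermitian hR.isHermitian hS.det_pos.ne'.isUnit

theorem posterior_update_monotone_general {n m : ℕ}
    (C : Matrix (Fin m) (Fin n) ℝ) (D : Matrix (Fin m) (Fin m) ℝ)
    (hD : (D * Dᵀ).PosDef)
    (P P' : Matrix (Fin n) (Fin n) ℝ)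
    (hP' : P'.PosSemidef)
    (hle : (P - P').PosSemidef) :
    ((P - P * Cᵀ * (C * P * Cᵀ + D * Dᵀ)⁻¹ * C * P)
      - (P' - P' * Cᵀ * (C * P' * Cᵀ + D * Dᵀ)⁻¹ * C * P')).PosSemidef := by
  have h := posteriorCov_mono (C := C) hD hP' hle
  simpa only [le_iff, posteriorCov, kalmanGain, conjTranspose_eq_transpose_of_trivial] using h

/-- Monotonicity of the Kalman posterior covariance map
`P ↦ P − P Cᵀ (C P Cᵀ + D Dᵀ)⁻¹ C P` in the Loewner order. -/
theorem posterior_update_monotone {n m : ℕ}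
    (C : Matrix (Fin m) (Fin n) ℝ) (D : Matrix (Fin m) (Fin m) ℝ)
    (hD : (D * Dᵀ).PosDef)
    (P P' : Matrix (Fin n) (Fin n) ℝ)
    (hP' : P'.PosSemidef) (hP : P.PosSemidef)
    (hle : (P - P').PosSemidef) :
    ((P - P * Cᵀ * (C * P * Cᵀ + D * Dᵀ)⁻¹ * C * P)
      - (P' - P' * Cᵀ * (C * P' * Cᵀ + D * Dᵀ)⁻¹ * C * P')).PosSemidef :=
  posterior_update_monotone_general C D hD P P' hP' hle
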